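/- arXiv:1805.01310 — 6 statements merged into one kernel-verified Lean document; each statement's English description precedes it below -/
import Mathlib

section
/- Let 𝓗 be a hypergraph on a finite linearly ordered vertex set V, let X ⊆ V be a nonempty initial segment, and let H be a minimal transversal of 𝓗 that is lexicographically smallest among all minimal transversals (i.e., H ⪯lex H' for every minimal transversal H' of 𝓗). Then there exists a minimal transversal of 𝓗 containing X if and only if X ⊆ H. -/
/-- `S ⪯lex T` iff `S = T` or the minimum element of the symmetric difference
`S Δ T = (S \ T) ∪ (T \ S)` belongs to `S`. -/
def LexLE {α : Type*} [LinearOrder α] (S T : Finset α) : Prop :=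
  S = T ∨ ∃ hne : ((S \ T) ∪ (T \ S)).Nonempty, ((S \ T) ∪ (T \ S)).min' hne ∈ S

/-- Let `X` be a nonempty initial segment of the linearly ordered vertex set `V`,
and let `H` be the lexicographically smallest minimal transversal of `𝓗`.
Then some minimal transversal of `𝓗` contains `X` iff `X ⊆ H`. -/
theorem extendable_iff_subset_lex_smallest {α : Type*} [LinearOrder α]
    (V : Finset α) (𝓗 : Finset (Finset α)) (hEV : ∀ E ∈ 𝓗, E ⊆ V)
    (X : Finset α) (hXV : X ⊆ V) (hXne : X.Nonempty)
    (hinit : ∀ x ∈ X, ∀ y ∈ V \ X, x < y)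
    (H : Finset α) (hHV : H ⊆ V)
    (htr : ∀ E ∈ 𝓗, (E ∩ H).Nonempty)
    (hmin : ∀ H' ⊂ H, ¬ (∀ E ∈ 𝓗, (E ∩ H').Nonempty))
    (hsmallest : ∀ H' : Finset α, H' ⊆ V → (∀ E ∈ 𝓗, (E ∩ H').Nonempty) →
      (∀ H'' ⊂ H', ¬ (∀ E ∈ 𝓗, (E ∩ H'').Nonempty)) → LexLE H H') :
    (∃ H' : Finset α, H' ⊆ V ∧ X ⊆ H' ∧ (∀ E ∈ 𝓗, (E ∩ H').Nonempty) ∧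
        ∀ H'' ⊂ H', ¬ (∀ E ∈ 𝓗, (E ∩ H'').Nonempty)) ↔
      X ⊆ H := by
  constructor
  · rintro ⟨H', hH'V, hXH', htr', hmin'⟩
    intro x hx
    by_contra hxH
    rcases hsmallest H' hH'V htr' hmin' with heq | ⟨hne, hm⟩
    · exact hxH (heq ▸ hXH' hx)
    · have hxΔ : x ∈ (H \ H') ∪ (H' \ H) :=
        Finset.mem_union_right _ (Finset.mem_sdiff.mpr ⟨hXH' hx, hxH⟩)
      have hmΔ := Finset.min'_mem _ hne
      have hmle : ((H \ H') ∪ (H' \ H)).min' hne ≤ x := Finset.min'_le _ x hxΔ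
      have hmH' : ((H \ H') ∪ (H' \ H)).min' hne ∉ H' := by
        rcases Finset.mem_union.mp hmΔ with h | h
        · exact (Finset.mem_sdiff.mp h).2
        · exact absurd hm (Finset.mem_sdiff.mp h).2
      have hlt : x < ((H \ H') ∪ (H' \ H)).min' hne :=
        hinit x hx _ (Finset.mem_sdiff.mpr ⟨hHV hm, fun hmX => hmH' (hXH' hmX)⟩)
      exact absurd hmle (not_le.mpr hlt)
  · intro hXH
    exact ⟨H, hHV, hXH, htr, hmin⟩
end

section
/- Let 𝓗 be a hypergraph on a finite vertex set V and let X ⊆ V be nonempty. There exists a minimal transversal H of 𝓗 with X ⊆ H if and only if there exists a choice of edges (E_x)_{x∈X} with E_x ∈ 𝓗 and E_x ∩ X = {x} for every x ∈ X, such that for every edge T ∈ 𝓗 with T ∩ X = ∅ one has T ⊄ ⋃_{x∈X} E_x. -/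
/-!
Every vertex `x` of a minimal transversal `H` has a private edge `E_x ∩ H = {x}`; these edges
form the selection, since an edge missing `X` meets `H` outside `X`, hence outside every `E_x`.
Conversely, given a selection, `X ∪ (V \ ⋃ₓ E_x)` is a transversal, and each of its
sub-transversals must contain `X`, because it can hit `E_x` only at `x`. A minimal
sub-transversal is then the required `H`.
-/

namespace Hypergraph

variable {α : Type*} [DecidableEq α]

def IsTransversal (𝓗 : Finset (Finset α)) (H : Finset α) : Prop :=
  ∀ E ∈ 𝓗, (E ∩ H).Nonempty

def IsWitnessSelection (𝓗 : Finset (Finset α)) (X : Finset α) (E : α → Finset α) : Prop :=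
  (∀ x ∈ X, E x ∈ 𝓗 ∧ E x ∩ X = {x}) ∧ ∀ T ∈ 𝓗, T ∩ X = ∅ → ¬ T ⊆ X.biUnion E

variable {𝓗 : Finset (Finset α)} {H X : Finset α}

theorem IsTransversal.exists_minimal_subset (hH : IsTransversal 𝓗 H) :
    ∃ H' ⊆ H, Minimal (IsTransversal 𝓗) H' :=
  exists_minimal_le_of_wellFoundedLT _ H hH

theorem exists_inter_eq_singleton_of_minimal (hH : Minimal (IsTransversal 𝓗) H) {x : α}
    (hx : x ∈ H) : ∃ E ∈ 𝓗, E ∩ H = {x} := by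
  have hErase : ¬ IsTransversal 𝓗 (H.erase x) :=
    (minimal_iff_forall_lt.mp hH).2 (Finset.erase_ssubset hx)
  simp only [IsTransversal, not_forall, Finset.not_nonempty_iff_eq_empty] at hErase
  obtain ⟨E, hE, hEmpty⟩ := hErase
  refine ⟨E, hE, (hH.prop E hE).subset_singleton_iff.mp fun y hy => ?_⟩
  rw [Finset.mem_inter] at hy
  rw [Finset.mem_singleton]
  by_contra hyx
  simpa [hEmpty] using Finset.mem_inter.mpr ⟨hy.1, Finset.mem_erase.mpr ⟨hyx, hy.2⟩⟩

theorem inter_eq_singleton_of_subset {s : Finset α} {x : α} (h : s ∩ H = {x}) (hXH : X ⊆ H)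
    (hx : x ∈ X) : s ∩ X = {x} := by
  rw [← Finset.inter_eq_right.mpr hXH, ← Finset.inter_assoc, h, Finset.singleton_inter_of_mem hx]

theorem exists_isWitnessSelection_of_minimal (hH : Minimal (IsTransversal 𝓗) H) (hXH : X ⊆ H) :
    ∃ E, IsWitnessSelection 𝓗 X E := by
  choose! E hE𝓗 hEH using fun x (hx : x ∈ H) => exists_inter_eq_singleton_of_minimal hH hx
  refine ⟨E, fun x hx => ⟨hE𝓗 x (hXH hx), inter_eq_singleton_of_subset (hEH x (hXH hx)) hXH hx⟩,
    fun T hT hTX hTE => ?_⟩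
  obtain ⟨y, hy⟩ := hH.prop T hT
  obtain ⟨hyT, hyH⟩ := Finset.mem_inter.mp hy
  obtain ⟨x, hx, hyE⟩ := Finset.mem_biUnion.mp (hTE hyT)
  have hyx : y = x := by
    simpa [hEH x (hXH hx)] using Finset.mem_inter.mpr ⟨hyE, hyH⟩
  subst hyx
  simpa [hTX] using Finset.mem_inter.mpr ⟨hyT, hx⟩

theorem isTransversal_union_sdiff_biUnion {V : Finset α} (hEV : ∀ E ∈ 𝓗, E ⊆ V)
    {E : α → Finset α} (hE : IsWitnessSelection 𝓗 X E) :
    IsTransversal 𝓗 (X ∪ (V \ X.biUnion E)) := by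
  intro T hT
  by_cases hTX : T ∩ X = ∅
  · obtain ⟨t, htT, htE⟩ := Finset.not_subset.mp (hE.2 T hT hTX)
    exact ⟨t, Finset.mem_inter.mpr
      ⟨htT, Finset.mem_union_right _ (Finset.mem_sdiff.mpr ⟨hEV T hT htT, htE⟩)⟩⟩
  · exact (Finset.nonempty_iff_ne_empty.mpr hTX).mono
      (Finset.inter_subset_inter_left Finset.subset_union_left)

theorem subset_of_isTransversal_of_subset_union_sdiff {V S : Finset α} {E : α → Finset α}
    (hE : IsWitnessSelection 𝓗 X E) (hS : IsTransversal 𝓗 S)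
    (hSsub : S ⊆ X ∪ (V \ X.biUnion E)) : X ⊆ S := by
  intro x hx
  obtain ⟨hE𝓗, hEX⟩ := hE.1 x hx
  obtain ⟨y, hy⟩ := hS (E x) hE𝓗
  obtain ⟨hyE, hyS⟩ := Finset.mem_inter.mp hy
  have hyX : y ∈ X := by
    rcases Finset.mem_union.mp (hSsub hyS) with hyX | hyV
    · exact hyX
    · exact absurd (Finset.mem_biUnion.mpr ⟨x, hx, hyE⟩) (Finset.mem_sdiff.mp hyV).2
  have hyx : y = x := by
    simpa [hEX] using Finset.mem_inter.mpr ⟨hyE, hyX⟩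
  exact hyx ▸ hyS

theorem exists_minimal_of_isWitnessSelection {V : Finset α} (hEV : ∀ E ∈ 𝓗, E ⊆ V)
    (hXV : X ⊆ V) {E : α → Finset α} (hE : IsWitnessSelection 𝓗 X E) :
    ∃ H ⊆ V, X ⊆ H ∧ Minimal (IsTransversal 𝓗) H := by
  obtain ⟨H, hHsub, hH⟩ := (isTransversal_union_sdiff_biUnion hEV hE).exists_minimal_subset
  refine ⟨H, hHsub.trans (Finset.union_subset hXV Finset.sdiff_subset), ?_, hH⟩
  exact subset_of_isTransversal_of_subset_union_sdiff hE hH.prop hHsub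

end Hypergraph

open Hypergraph in
theorem extension_iff_witness_selection_general {α : Type*} [DecidableEq α]
    (V : Finset α) (𝓗 : Finset (Finset α)) (hEV : ∀ E ∈ 𝓗, E ⊆ V)
    (X : Finset α) (hXV : X ⊆ V) :
    (∃ H : Finset α, H ⊆ V ∧ X ⊆ H ∧ (∀ E ∈ 𝓗, (E ∩ H).Nonempty) ∧
        ∀ H' ⊂ H, ¬ (∀ E ∈ 𝓗, (E ∩ H').Nonempty)) ↔
      (∃ E : α → Finset α,
        (∀ x ∈ X, E x ∈ 𝓗 ∧ E x ∩ X = {x}) ∧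
        ∀ T ∈ 𝓗, T ∩ X = ∅ → ¬ T ⊆ X.biUnion E) := by
  constructor
  · rintro ⟨H, -, hXH, hH⟩
    exact exists_isWitnessSelection_of_minimal (minimal_iff_forall_lt.mpr hH) hXH
  · rintro ⟨E, hE⟩
    obtain ⟨H, hHV, hXH, hH⟩ := exists_minimal_of_isWitnessSelection hEV hXV hE
    exact ⟨H, hHV, hXH, minimal_iff_forall_lt.mp hH⟩

/-- For nonempty `X ⊆ V`, there is a minimal transversal of `𝓗` containing `X`
iff there is a choice of edges `(E_x)_{x∈X}` with `E_x ∈ 𝓗` and `E_x ∩ X = {x}`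
such that no edge `T ∈ 𝓗` with `T ∩ X = ∅` is contained in `⋃_{x∈X} E_x`. -/
theorem extension_iff_witness_selection {α : Type*} [DecidableEq α]
    (V : Finset α) (𝓗 : Finset (Finset α)) (hEV : ∀ E ∈ 𝓗, E ⊆ V)
    (X : Finset α) (hXV : X ⊆ V) (hXne : X.Nonempty) :
    (∃ H : Finset α, H ⊆ V ∧ X ⊆ H ∧ (∀ E ∈ 𝓗, (E ∩ H).Nonempty) ∧
        ∀ H' ⊂ H, ¬ (∀ E ∈ 𝓗, (E ∩ H').Nonempty)) ↔
      (∃ E : α → Finset α,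
        (∀ x ∈ X, E x ∈ 𝓗 ∧ E x ∩ X = {x}) ∧
        ∀ T ∈ 𝓗, T ∩ X = ∅ → ¬ T ⊆ X.biUnion E) :=
  extension_iff_witness_selection_general V 𝓗 hEV X hXV
end

section
/- Let 𝓗 be a hypergraph on a finite vertex set V and X ⊆ V. Suppose (E_x)_{x∈X} is a choice of edges with E_x ∈ 𝓗 and E_x ∩ X = {x} for every x ∈ X, such that no edge T ∈ 𝓗 with T ∩ X = ∅ satisfies T ⊆ ⋃_{x∈X} E_x. Then Z = V ∖ ⋃_{x∈X}(E_x ∖ {x}) is a transversal of 𝓗 containing X, and every minimal transversal H of 𝓗 with H ⊆ Z satisfies X ⊆ H. -/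
/-- If `(E_x)_{x∈X}` is a choice of edges with `E_x ∩ X = {x}` such that no edge
`T ∈ 𝓗` with `T ∩ X = ∅` is contained in `⋃_{x∈X} E_x`, then
`Z = V \ ⋃_{x∈X}(E_x \ {x})` is a transversal containing `X`, and every
minimal transversal `H ⊆ Z` of `𝓗` satisfies `X ⊆ H`. -/
theorem selection_gives_transversal {α : Type*} [DecidableEq α]
    (V : Finset α) (𝓗 : Finset (Finset α)) (hEV : ∀ E ∈ 𝓗, E ⊆ V)
    (X : Finset α) (hXV : X ⊆ V)
    (E : α → Finset α) (hwit : ∀ x ∈ X, E x ∈ 𝓗 ∧ E x ∩ X = {x})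
    (hfree : ∀ T ∈ 𝓗, T ∩ X = ∅ → ¬ T ⊆ X.biUnion E) :
    (X ⊆ V \ X.biUnion (fun x => E x \ {x}) ∧
      ∀ E' ∈ 𝓗, (E' ∩ (V \ X.biUnion (fun x => E x \ {x}))).Nonempty) ∧
      ∀ H : Finset α, H ⊆ V \ X.biUnion (fun x => E x \ {x}) →
        (∀ E' ∈ 𝓗, (E' ∩ H).Nonempty) →
        (∀ H' ⊂ H, ¬ (∀ E' ∈ 𝓗, (E' ∩ H').Nonempty)) →
        X ⊆ H := by
  have hXZ : X ⊆ V \ X.biUnion (fun x => E x \ {x}) := by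
    intro x hx
    simp only [Finset.mem_sdiff, Finset.mem_biUnion, Finset.mem_singleton, not_exists]
    refine ⟨hXV hx, fun y ⟨hy, hmem, hne⟩ => ?_⟩
    have := (hwit y hy).2
    have hxy : x ∈ E y ∩ X := Finset.mem_inter.2 ⟨hmem, hx⟩
    rw [this, Finset.mem_singleton] at hxy
    exact hne hxy
  refine ⟨⟨hXZ, fun E' hE' => ?_⟩, fun H hHZ hHtr _ => ?_⟩
  · by_cases hEX : (E' ∩ X).Nonempty
    · obtain ⟨x, hx⟩ := hEX
      rw [Finset.mem_inter] at hx
      exact ⟨x, Finset.mem_inter.2 ⟨hx.1, hXZ hx.2⟩⟩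
    · rw [Finset.not_nonempty_iff_eq_empty] at hEX
      have := hfree E' hE' hEX
      rw [Finset.not_subset] at this
      obtain ⟨v, hvE, hvU⟩ := this
      refine ⟨v, Finset.mem_inter.2 ⟨hvE, Finset.mem_sdiff.2 ⟨hEV E' hE' hvE, fun h => ?_⟩⟩⟩
      obtain ⟨y, hy, hmem⟩ := Finset.mem_biUnion.1 h
      exact hvU (Finset.mem_biUnion.2 ⟨y, hy, (Finset.mem_sdiff.1 hmem).1⟩)
  · intro x hx
    obtain ⟨v, hv⟩ := hHtr (E x) (hwit x hx).1
    rw [Finset.mem_inter] at hv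
    have hvZ := hHZ hv.2
    rw [Finset.mem_sdiff] at hvZ
    have : v = x := by
      by_contra hne
      exact hvZ.2 (Finset.mem_biUnion.2 ⟨x, hx,
        Finset.mem_sdiff.2 ⟨hv.1, by simp [hne]⟩⟩)
    exact this ▸ hv.2
end

section
/- Let 𝓗 be a hypergraph on a finite vertex set V, and let X, Y ⊆ V be disjoint with X nonempty. There exists a minimal transversal H of 𝓗 with X ⊆ H ⊆ V ∖ Y if and only if there exists a choice of edges (E_x)_{x∈X} with E_x ∈ 𝓗 and E_x ∩ X = {x} for every x ∈ X, such that for every edge T ∈ 𝓗 with T ∩ X = ∅ one has T ∖ Y ⊄ ⋃_{x∈X}(E_x ∖ Y). -/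
/-!
In a minimal transversal `H` every vertex `x ∈ H` has a private edge `E` with `E ∩ H = {x}`.
The private edges of the vertices of `X` form the witness selection: an edge `T` missing `X`
meets `H` in a vertex outside `X ∪ Y`, and such a vertex lies in no private edge of `X`.
Conversely, given a witness selection, `X` together with the vertices outside `Y` covered by no
chosen edge is a transversal in which each `E x` meets only `x`; hence every minimal transversal
inside it still contains all of `X`.
-/

open Finset

theorem Finset.inter_eq_singleton_of_subset {α : Type*} [DecidableEq α] {s X K : Finset α}
    {x : α} (h : s ∩ K = {x}) (hXK : X ⊆ K) (hx : x ∈ X) : s ∩ X = {x} :=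
  Subset.antisymm (h ▸ inter_subset_inter_left hXK)
    (singleton_subset_iff.2
      (mem_inter.2 ⟨mem_of_mem_inter_left (h ▸ mem_singleton_self x), hx⟩))

section Transversal

variable {α : Type*} [DecidableEq α] {𝓗 : Finset (Finset α)} {H K E : Finset α} {x : α}

def IsTransversal (𝓗 : Finset (Finset α)) (H : Finset α) : Prop :=
  ∀ E ∈ 𝓗, (E ∩ H).Nonempty

theorem IsTransversal.exists_inter_eq_singleton_of_minimal (hH : Minimal (IsTransversal 𝓗) H)
    (hx : x ∈ H) : ∃ E ∈ 𝓗, E ∩ H = {x} := by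
  have hErase : ¬ IsTransversal 𝓗 (H.erase x) := hH.not_prop_of_lt (erase_ssubset hx)
  simp only [IsTransversal, not_forall, not_nonempty_iff_eq_empty] at hErase
  obtain ⟨E, hE𝓗, hEerase⟩ := hErase
  refine ⟨E, hE𝓗, (hH.prop E hE𝓗).subset_singleton_iff.1 fun y hy => ?_⟩
  rw [mem_inter] at hy
  refine mem_singleton.2 (by_contra fun hyx => ?_)
  have hyErase : y ∈ E ∩ H.erase x := mem_inter.2 ⟨hy.1, mem_erase.2 ⟨hyx, hy.2⟩⟩
  exact notMem_empty y (hEerase ▸ hyErase)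

theorem IsTransversal.mem_of_inter_eq_singleton (hH : IsTransversal 𝓗 H) (hHK : H ⊆ K)
    (hE : E ∈ 𝓗) (hEK : E ∩ K = {x}) : x ∈ H := by
  have hEH : E ∩ H = {x} :=
    (hH E hE).subset_singleton_iff.1 (hEK ▸ inter_subset_inter_left hHK)
  exact mem_of_mem_inter_right (hEH ▸ mem_singleton_self x)

end Transversal

section WitnessSelection

variable {α : Type*} [DecidableEq α] {𝓗 : Finset (Finset α)} {V X Y H : Finset α}
  {E : α → Finset α} {x : α}

def IsWitnessSelection (𝓗 : Finset (Finset α)) (X Y : Finset α) (E : α → Finset α) : Prop :=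
  (∀ x ∈ X, E x ∈ 𝓗 ∧ E x ∩ X = {x}) ∧
    ∀ T ∈ 𝓗, T ∩ X = ∅ → ¬ T \ Y ⊆ X.biUnion (fun x => E x \ Y)

theorem IsTransversal.isWitnessSelection (hH : IsTransversal 𝓗 H) (hXH : X ⊆ H)
    (hHY : Disjoint H Y) (hE : ∀ x ∈ X, E x ∈ 𝓗 ∧ E x ∩ H = {x}) :
    IsWitnessSelection 𝓗 X Y E := by
  refine ⟨fun x hx => ⟨(hE x hx).1, inter_eq_singleton_of_subset (hE x hx).2 hXH hx⟩,
    fun T hT hTX hTsub => ?_⟩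
  obtain ⟨t, ht⟩ := hH T hT
  rw [mem_inter] at ht
  have htY : t ∉ Y := disjoint_left.1 hHY ht.2
  obtain ⟨y, hy, htEy⟩ := mem_biUnion.1 (hTsub (mem_sdiff.2 ⟨ht.1, htY⟩))
  have hty : t = y :=
    mem_singleton.1 ((hE y hy).2 ▸ mem_inter.2 ⟨(mem_sdiff.1 htEy).1, ht.2⟩)
  exact notMem_empty t (hTX ▸ mem_inter.2 ⟨ht.1, hty ▸ hy⟩)

theorem IsWitnessSelection.inter_union_sdiff_eq_singleton (hE : IsWitnessSelection 𝓗 X Y E)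
    (W : Finset α) (hx : x ∈ X) : E x ∩ (X ∪ W \ X.biUnion E) = {x} := by
  have hEW : Disjoint (E x) (W \ X.biUnion E) :=
    disjoint_sdiff.mono_left (subset_biUnion_of_mem E hx)
  rw [inter_union_distrib_left, (hE.1 x hx).2, disjoint_iff_inter_eq_empty.1 hEW, union_empty]

theorem IsWitnessSelection.isTransversal_union_sdiff (hE : IsWitnessSelection 𝓗 X Y E)
    (hEV : ∀ T ∈ 𝓗, T ⊆ V) : IsTransversal 𝓗 (X ∪ (V \ Y) \ X.biUnion E) := by
  intro T hT
  rcases (T ∩ X).eq_empty_or_nonempty with hTX | hTX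
  · obtain ⟨t, htTY, htU⟩ := not_subset.1 (hE.2 T hT hTX)
    obtain ⟨htT, htY⟩ := mem_sdiff.1 htTY
    have htE : t ∉ X.biUnion E := fun htE => by
      obtain ⟨y, hy, htEy⟩ := mem_biUnion.1 htE
      exact htU (mem_biUnion.2 ⟨y, hy, mem_sdiff.2 ⟨htEy, htY⟩⟩)
    have htVY : t ∈ V \ Y := mem_sdiff.2 ⟨hEV T hT htT, htY⟩
    exact ⟨t, mem_inter.2 ⟨htT, mem_union_right _ (mem_sdiff.2 ⟨htVY, htE⟩)⟩⟩
  · exact hTX.mono (inter_subset_inter_left subset_union_left)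

end WitnessSelection

theorem extension_avoiding_iff_witness_selection_general {α : Type*} [DecidableEq α]
    (V : Finset α) (𝓗 : Finset (Finset α)) (hEV : ∀ E ∈ 𝓗, E ⊆ V)
    (X Y : Finset α) (hXV : X ⊆ V)
    (hdisj : Disjoint X Y) :
    (∃ H : Finset α, X ⊆ H ∧ H ⊆ V \ Y ∧ (∀ E ∈ 𝓗, (E ∩ H).Nonempty) ∧
        ∀ H' ⊂ H, ¬ (∀ E ∈ 𝓗, (E ∩ H').Nonempty)) ↔
      (∃ E : α → Finset α,
        (∀ x ∈ X, E x ∈ 𝓗 ∧ E x ∩ X = {x}) ∧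
        ∀ T ∈ 𝓗, T ∩ X = ∅ → ¬ T \ Y ⊆ X.biUnion (fun x => E x \ Y)) := by
  constructor
  · rintro ⟨H, hXH, hHVY, hH⟩
    have hHmin : Minimal (IsTransversal 𝓗) H := minimal_iff_forall_lt.2 hH
    choose! E hE𝓗 hEH using fun x (hx : x ∈ X) =>
      IsTransversal.exists_inter_eq_singleton_of_minimal hHmin (hXH hx)
    exact ⟨E, hHmin.prop.isWitnessSelection hXH (disjoint_of_subset_left hHVY sdiff_disjoint)
      fun x hx => ⟨hE𝓗 x hx, hEH x hx⟩⟩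
  · rintro ⟨E, hE⟩
    obtain ⟨H, hHH₀, hH⟩ :=
      exists_minimal_le_of_wellFoundedLT _ _ (IsWitnessSelection.isTransversal_union_sdiff hE hEV)
    refine ⟨H, fun x hx => hH.prop.mem_of_inter_eq_singleton hHH₀ (hE.1 x hx).1
      (IsWitnessSelection.inter_union_sdiff_eq_singleton hE _ hx), ?_, minimal_iff_forall_lt.1 hH⟩
    exact hHH₀.trans (union_subset (subset_sdiff.2 ⟨hXV, hdisj⟩) sdiff_subset)

/-- For disjoint `X, Y ⊆ V` with `X` nonempty, there is a minimal transversal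
`H` of `𝓗` with `X ⊆ H ⊆ V \ Y` iff there is a choice of edges `(E_x)_{x∈X}`
with `E_x ∈ 𝓗` and `E_x ∩ X = {x}` such that for every edge `T ∈ 𝓗` with
`T ∩ X = ∅` one has `T \ Y ⊄ ⋃_{x∈X} (E_x \ Y)`. -/
theorem extension_avoiding_iff_witness_selection {α : Type*} [DecidableEq α]
    (V : Finset α) (𝓗 : Finset (Finset α)) (hEV : ∀ E ∈ 𝓗, E ⊆ V)
    (X Y : Finset α) (hXV : X ⊆ V) (hYV : Y ⊆ V)
    (hdisj : Disjoint X Y) (hXne : X.Nonempty) :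
    (∃ H : Finset α, X ⊆ H ∧ H ⊆ V \ Y ∧ (∀ E ∈ 𝓗, (E ∩ H).Nonempty) ∧
        ∀ H' ⊂ H, ¬ (∀ E ∈ 𝓗, (E ∩ H').Nonempty)) ↔
      (∃ E : α → Finset α,
        (∀ x ∈ X, E x ∈ 𝓗 ∧ E x ∩ X = {x}) ∧
        ∀ T ∈ 𝓗, T ∩ X = ∅ → ¬ T \ Y ⊆ X.biUnion (fun x => E x \ Y)) :=
  extension_avoiding_iff_witness_selection_general V 𝓗 hEV X Y hXV hdisj
end

section
/- Let 𝒮_1, …, 𝒮_k and 𝒯 be finite families of finite subsets of a universe U. Introduce a fresh, pairwise distinct marker element m(i,S) outside U for every i ∈ {1,…,k} and S ∈ 𝒮_i (formally, work in the disjoint sum of U and the set of pairs (i,S)). Define the single family 𝒮 = { S ∪ {m(i,S)} : 1 ≤ i ≤ k, S ∈ 𝒮_i } and 𝒯' = 𝒯 ∪ { {m(i,S), m(i,S')} : 1 ≤ i ≤ k, S, S' ∈ 𝒮_i, S ≠ S' }. Then there exists a choice of sets S_1 ∈ 𝒮_1, …, S_k ∈ 𝒮_k with T ⊄ ⋃_{i=1}^k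 S_i for all T ∈ 𝒯 if and only if there exist k pairwise distinct sets A_1, …, A_k ∈ 𝒮 with T' ⊄ ⋃_{j=1}^k A_j for all T' ∈ 𝒯'. -/
/-- Correctness of the reduction from Multicoloured Independent Family to
Independent Family.  Markers `m(i,S)` are realised as `Sum.inr (i, S)` in the
disjoint sum `α ⊕ (Fin k × Finset α)`. -/
theorem multicoloured_to_single {α : Type*} [DecidableEq α] (k : ℕ)
    (𝒮 : Fin k → Finset (Finset α)) (𝒯 : Finset (Finset α)) :
    (∃ f : Fin k → Finset α, (∀ i, f i ∈ 𝒮 i) ∧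
        ∀ T ∈ 𝒯, ¬ T ⊆ Finset.univ.biUnion f) ↔
      (∃ A : Fin k → Finset (α ⊕ (Fin k × Finset α)),
        Function.Injective A ∧
        (∀ j, A j ∈ (Finset.univ : Finset (Fin k)).biUnion (fun i =>
          (𝒮 i).image (fun S => S.image Sum.inl ∪ {Sum.inr (i, S)}))) ∧
        ∀ T' ∈ 𝒯.image (fun T => T.image Sum.inl) ∪
            (Finset.univ : Finset (Fin k)).biUnion (fun i =>
              ((𝒮 i ×ˢ 𝒮 i).filter (fun p => p.1 ≠ p.2)).image
                (fun p => {Sum.inr (i, p.1), Sum.inr (i, p.2)})),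
          ¬ T' ⊆ Finset.univ.biUnion A) := by
  constructor
  · rintro ⟨f, hf, hT⟩
    refine ⟨fun i => (f i).image Sum.inl ∪ {Sum.inr (i, f i)}, ?_, ?_, ?_⟩
    · intro i j hij
      have h : (Sum.inr (i, f i) : α ⊕ (Fin k × Finset α)) ∈
          (f j).image Sum.inl ∪ {Sum.inr (j, f j)} := by
        dsimp only at hij; rw [← hij]; simp
      simp only [Finset.mem_union, Finset.mem_image, Finset.mem_singleton,
        Sum.inr.injEq, Prod.mk.injEq] at h
      rcases h with ⟨a, _, ha⟩ | ⟨h1, _⟩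
      · exact absurd ha (by simp)
      · exact h1
    · intro j
      simp only [Finset.mem_biUnion, Finset.mem_image]
      exact ⟨j, Finset.mem_univ j, f j, hf j, rfl⟩
    · intro T' hT' hsub
      simp only [Finset.mem_union, Finset.mem_image, Finset.mem_biUnion,
        Finset.mem_filter, Finset.mem_product] at hT'
      rcases hT' with ⟨T, hT𝒯, rfl⟩ | ⟨i, -, ⟨p1, p2⟩, ⟨⟨hp1, hp2⟩, hne⟩, rfl⟩
      · refine hT T hT𝒯 ?_
        intro a ha
        have h := hsub (Finset.mem_image_of_mem Sum.inl ha)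
        simp only [Finset.mem_biUnion, Finset.mem_union, Finset.mem_image,
          Finset.mem_singleton, Finset.mem_univ, true_and] at h
        obtain ⟨j, hj⟩ := h
        rcases hj with ⟨b, hb, hba⟩ | hcontra
        · simp only [Sum.inl.injEq] at hba; subst hba
          exact Finset.mem_biUnion.2 ⟨j, Finset.mem_univ j, hb⟩
        · exact absurd hcontra (by simp)
      · have h1 := hsub (show (Sum.inr (i, p1) : α ⊕ (Fin k × Finset α)) ∈ _ by simp)
        have h2 := hsub (show (Sum.inr (i, p2) : α ⊕ (Fin k × Finset α)) ∈ _ by simp)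
        simp only [Finset.mem_biUnion, Finset.mem_union, Finset.mem_image,
          Finset.mem_singleton, Finset.mem_univ, true_and, Sum.inr.injEq,
          Prod.mk.injEq] at h1 h2
        obtain ⟨j1, hj1⟩ := h1
        obtain ⟨j2, hj2⟩ := h2
        rcases hj1 with ⟨a, _, ha⟩ | ⟨hi1, hs1⟩
        · exact absurd ha (by simp)
        rcases hj2 with ⟨a, _, ha⟩ | ⟨hi2, hs2⟩
        · exact absurd ha (by simp)
        subst hi1; subst hi2
        exact hne (hs1.trans hs2.symm)
  · rintro ⟨A, hinj, hmem, hT'⟩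
    have hrep : ∀ j, ∃ i, ∃ s, s ∈ 𝒮 i ∧ s.image Sum.inl ∪ {Sum.inr (i, s)} = A j := by
      intro j
      have h := hmem j
      simp only [Finset.mem_biUnion, Finset.mem_image, Finset.mem_univ, true_and] at h
      obtain ⟨i, s, hs, heq⟩ := h
      exact ⟨i, s, hs, heq⟩
    choose ι S hS hA using hrep
    have hιinj : Function.Injective ι := by
      intro j j' hjj'
      by_contra hne
      by_cases hSS : S j = S j'
      · exact hne (hinj (by rw [← hA j, ← hA j', hjj', hSS]))
      · have hpair : ({Sum.inr (ι j, S j), Sum.inr (ι j, S j')} :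
            Finset (α ⊕ (Fin k × Finset α))) ∈
            𝒯.image (fun T => T.image Sum.inl) ∪
            (Finset.univ : Finset (Fin k)).biUnion (fun i =>
              ((𝒮 i ×ˢ 𝒮 i).filter (fun p => p.1 ≠ p.2)).image
                (fun p => {Sum.inr (i, p.1), Sum.inr (i, p.2)})) := by
          refine Finset.mem_union_right _ ?_
          simp only [Finset.mem_biUnion, Finset.mem_image, Finset.mem_filter,
            Finset.mem_product, Finset.mem_univ, true_and]
          refine ⟨ι j, (S j, S j'), ⟨⟨hS j, ?_⟩, hSS⟩, rfl⟩
          rw [hjj']; exact hS j'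
        refine hT' _ hpair ?_
        intro x hx
        simp only [Finset.mem_insert, Finset.mem_singleton] at hx
        rcases hx with rfl | rfl
        · refine Finset.mem_biUnion.2 ⟨j, Finset.mem_univ j, ?_⟩
          rw [← hA j]; simp
        · refine Finset.mem_biUnion.2 ⟨j', Finset.mem_univ j', ?_⟩
          rw [← hA j', hjj']; simp
    have hιsurj : Function.Surjective ι := Finite.surjective_of_injective hιinj
    choose g hg using hιsurj
    refine ⟨fun i => S (g i), ?_, ?_⟩
    · intro i
      have := hS (g i)
      rwa [hg i] at this
    · intro T hT hsub
      refine hT' (T.image Sum.inl)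
        (Finset.mem_union_left _ (Finset.mem_image_of_mem _ hT)) ?_
      intro x hx
      simp only [Finset.mem_image] at hx
      obtain ⟨a, ha, rfl⟩ := hx
      have := hsub ha
      simp only [Finset.mem_biUnion, Finset.mem_univ, true_and] at this
      obtain ⟨i, hi⟩ := this
      refine Finset.mem_biUnion.2 ⟨g i, Finset.mem_univ _, ?_⟩
      rw [← hA (g i)]
      exact Finset.mem_union_left _ (Finset.mem_image_of_mem _ hi)
end

section
/- Let 𝒮 and 𝒯 be finite families of finite subsets of a universe U and let k ≥ 1. Introduce a fresh, pairwise distinct marker element m(S,i) outside U for every S ∈ 𝒮 and i ∈ {1,…,k} (formally, work in the disjoint sum of U and the set of pairs (S,i)). Define 𝒮_i = { S ∪ {m(S,i)} : S ∈ 𝒮 } for each i, and 𝒯' = 𝒯 ∪ { {m(S,i), m(S,j)} : S ∈ 𝒮, 1 ≤ i < j ≤ k }. Then there exist k pairwise distinct sets S_1, …, S_k ∈ 𝒮 with T ⊄ ⋃_{i=1}^k S_i for all T ∈ 𝒯 if and only if there exists a choice of sets A_1 ∈ 𝒮_1, …, A_k ∈ 𝒮_k with T' ⊄ ⋃_{i=1}^k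 A_i for all T' ∈ 𝒯'. -/
/-- Correctness of the reduction from Independent Family to Multicoloured
Independent Family.  Markers `m(S,i)` are realised as `Sum.inr (S, i)` in the
disjoint sum `α ⊕ (Finset α × Fin k)`. -/
theorem single_to_multicoloured {α : Type*} [DecidableEq α] (k : ℕ) (hk : 1 ≤ k)
    (𝒮 : Finset (Finset α)) (𝒯 : Finset (Finset α)) :
    (∃ S : Fin k → Finset α, Function.Injective S ∧ (∀ i, S i ∈ 𝒮) ∧
        ∀ T ∈ 𝒯, ¬ T ⊆ Finset.univ.biUnion S) ↔
      (∃ A : Fin k → Finset (α ⊕ (Finset α × Fin k)),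
        (∀ i, A i ∈ 𝒮.image (fun S => S.image Sum.inl ∪ {Sum.inr (S, i)})) ∧
        ∀ T' ∈ 𝒯.image (fun T => T.image Sum.inl) ∪
            𝒮.biUnion (fun S =>
              ((Finset.univ ×ˢ Finset.univ : Finset (Fin k × Fin k)).filter
                  (fun p => p.1 < p.2)).image
                (fun p => {Sum.inr (S, p.1), Sum.inr (S, p.2)})),
          ¬ T' ⊆ Finset.univ.biUnion A) := by
  constructor
  · rintro ⟨S, hinj, hmem, hfor⟩
    refine ⟨fun i => (S i).image Sum.inl ∪ {Sum.inr (S i, i)}, fun i =>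
      Finset.mem_image.mpr ⟨S i, hmem i, rfl⟩, ?_⟩
    intro T' hT' hsub
    rcases Finset.mem_union.mp hT' with h | h
    · obtain ⟨T, hT, rfl⟩ := Finset.mem_image.mp h
      refine hfor T hT (fun x hx => ?_)
      have := hsub (Finset.mem_image.mpr ⟨x, hx, rfl⟩)
      obtain ⟨i, -, hi⟩ := Finset.mem_biUnion.mp this
      rcases Finset.mem_union.mp hi with h' | h'
      · obtain ⟨y, hy, hxy⟩ := Finset.mem_image.mp h'
        cases Sum.inl.inj hxy
        exact Finset.mem_biUnion.mpr ⟨i, Finset.mem_univ i, hy⟩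
      · simp at h'
    · obtain ⟨S', hS', h⟩ := Finset.mem_biUnion.mp h
      obtain ⟨⟨i, j⟩, hp, rfl⟩ := Finset.mem_image.mp h
      have hij : i < j := (Finset.mem_filter.mp hp).2
      have key : ∀ l : Fin k, Sum.inr (S', l) ∈ Finset.univ.biUnion
          (fun i => (S i).image Sum.inl ∪ {Sum.inr (S i, i)}) → S' = S l := by
        intro l hl
        obtain ⟨m, -, hm⟩ := Finset.mem_biUnion.mp hl
        rcases Finset.mem_union.mp hm with h' | h'
        · obtain ⟨y, -, hy⟩ := Finset.mem_image.mp h'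
          exact absurd hy (by simp)
        · simp only [Finset.mem_singleton, Sum.inr.injEq, Prod.mk.injEq] at h'
          obtain ⟨h1, h2⟩ := h'
          subst h2; exact h1
      have hi : S' = S i := key i (hsub (by simp))
      have hj : S' = S j := key j (hsub (by simp))
      exact absurd (hinj (hi.symm.trans hj)) hij.ne
  · rintro ⟨A, hA, hfor⟩
    choose B hB hAB using fun i => Finset.mem_image.mp (hA i)
    have hmark : ∀ l : Fin k, Sum.inr (B l, l) ∈ Finset.univ.biUnion A := by
      intro l
      exact Finset.mem_biUnion.mpr ⟨l, Finset.mem_univ l,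
        (hAB l) ▸ Finset.mem_union_right _ (Finset.mem_singleton_self _)⟩
    have hinj : Function.Injective B := by
      intro i j hB'
      by_contra hne
      have hlt : ∃ p : Fin k × Fin k, p.1 < p.2 ∧ B p.1 = B p.2 := by
        rcases lt_or_gt_of_ne hne with h | h
        · exact ⟨(i, j), h, hB'⟩
        · exact ⟨(j, i), h, hB'.symm⟩
      obtain ⟨⟨a, b⟩, hab, hBab⟩ := hlt
      refine hfor {Sum.inr (B a, a), Sum.inr (B a, b)} ?_ ?_
      · refine Finset.mem_union_right _ (Finset.mem_biUnion.mpr ⟨B a, hB a,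
          Finset.mem_image.mpr ⟨(a, b), Finset.mem_filter.mpr
            ⟨Finset.mem_product.mpr ⟨Finset.mem_univ a, Finset.mem_univ b⟩, hab⟩, rfl⟩⟩)
      · intro x hx
        rcases Finset.mem_insert.mp hx with rfl | hx
        · exact hmark a
        · rw [Finset.mem_singleton.mp hx, hBab]
          exact hmark b
    refine ⟨B, hinj, hB, ?_⟩
    intro T hT hsub
    refine hfor (T.image Sum.inl)
      (Finset.mem_union_left _ (Finset.mem_image.mpr ⟨T, hT, rfl⟩)) ?_
    intro x hx
    obtain ⟨y, hy, rfl⟩ := Finset.mem_image.mp hx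
    obtain ⟨i, -, hi⟩ := Finset.mem_biUnion.mp (hsub hy)
    exact Finset.mem_biUnion.mpr ⟨i, Finset.mem_univ i,
      (hAB i) ▸ Finset.mem_union_left _ (Finset.mem_image.mpr ⟨y, hi, rfl⟩)⟩
end
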